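/- arXiv:1910.02819 — 2 statements merged into one kernel-verified Lean document; each statement's English description precedes it below -/
import Mathlib

section
/- For every vertex v of the octahedron and every sequence L = (ℓ_1, …, ℓ_k) with each ℓ_i ∈ {1, 2, 3, 4} and ℓ_1 + ⋯ + ℓ_k = 12, the octahedron has a P_{(L,v)}-decomposition. -/
open SimpleGraph

namespace Quartic

variable {V : Type*}

/-- The vertex list `l` (the support of a trail `v_0 v_1 … v_m`) has a subcycle of
length `t` beginning at index `i`: the entries at positions `i` and `i + t` coincide
and the entries at positions `i, …, i + t - 1` are pairwise distinct.  Only short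
lengths `1 ≤ t ≤ 4` are recorded. -/
def ShortSubcycleAt (l : List V) (i t : ℕ) : Prop :=
  1 ≤ t ∧ t ≤ 4 ∧ i + t < l.length ∧
    l[i]? = l[i + t]? ∧
    ∀ p q, i ≤ p → p < q → q < i + t → l[p]? ≠ l[q]?

/-- A trail (given as a walk) is 4-locally self-avoiding if it has no subcycle of
length at most 4. -/
def TrailLSA4 {G : SimpleGraph V} {u v : V} (W : G.Walk u v) : Prop :=
  ¬ ∃ i t, ShortSubcycleAt W.support i t

/-- Cyclic analogue of `ShortSubcycleAt`, used for circuits: here `l` is the support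
of a closed walk with the repeated final vertex removed, and indices are taken modulo
`l.length`, so that subcycles may wrap around the base point. -/
def CyclicShortSubcycleAt (l : List V) (i t : ℕ) : Prop :=
  1 ≤ t ∧ t ≤ 4 ∧ t ≤ l.length ∧
    l[i % l.length]? = l[(i + t) % l.length]? ∧
    ∀ p q, p < q → q < t →
      l[(i + p) % l.length]? ≠ l[(i + q) % l.length]?

/-- A circuit (closed walk) is 4-locally self-avoiding if it has no cyclic subcycle of
length at most 4. -/
def CircuitLSA4 {G : SimpleGraph V} {u : V} (W : G.Walk u u) : Prop :=
  ¬ ∃ i t, CyclicShortSubcycleAt W.support.dropLast i t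

/-- `W` is an Eulerian trail of its graph: a trail traversing every edge exactly once. -/
def IsEulerianTrail {G : SimpleGraph V} {u v : V} (W : G.Walk u v) : Prop :=
  W.IsTrail ∧ ∀ e, e ∈ G.edgeSet ↔ e ∈ W.edges

/-- `G` admits a 4-locally self-avoiding Eulerian circuit. -/
def HasLSA4EulerianCircuit (G : SimpleGraph V) : Prop :=
  ∃ (u : V) (W : G.Walk u u), IsEulerianTrail W ∧ CircuitLSA4 W

/-- An `L`-path-chain from `u` to `w` in `G`: a sequence of `k` pairwise edge-disjoint
paths covering `E(G)`, the `i`-th of length `ℓ i`, where the first path starts at `u`,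
the last path ends at `w`, and consecutive paths share their endpoint. -/
def PathChain (G : SimpleGraph V) (u w : V) {k : ℕ} (ℓ : Fin k → ℕ) : Prop :=
  ∃ (v : Fin (k + 1) → V) (P : ∀ i : Fin k, G.Walk (v i.castSucc) (v i.succ)),
    v 0 = u ∧ v (Fin.last k) = w ∧
    (∀ i, (P i).IsPath) ∧ (∀ i, (P i).length = ℓ i) ∧
    (∀ i j, i ≠ j → ∀ e, e ∈ (P i).edges → e ∉ (P j).edges) ∧
    (∀ e, e ∈ G.edgeSet → ∃ i, e ∈ (P i).edges)

/-- The graph `F₆` on vertices `x = 0`, `a = 1`, `b = 2`, `c = 3`, `d = 4`, `y = 5`,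
with the 11 edges `xa, xb, xc, ya, yc, yd, ab, bc, cd, ad, bd`. -/
def F6 : SimpleGraph (Fin 6) :=
  SimpleGraph.fromEdgeSet
    {s((0 : Fin 6), 1), s((0 : Fin 6), 2), s((0 : Fin 6), 3),
     s((5 : Fin 6), 1), s((5 : Fin 6), 3), s((5 : Fin 6), 4),
     s((1 : Fin 6), 2), s((2 : Fin 6), 3), s((3 : Fin 6), 4),
     s((1 : Fin 6), 4), s((2 : Fin 6), 4)}

/-- The octahedron `K_{2,2,2}`, with parts `{0,3}`, `{1,4}`, `{2,5}`. -/
def Octahedron : SimpleGraph (Fin 6) :=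
  SimpleGraph.fromRel (fun i j => (i : ℕ) % 3 ≠ (j : ℕ) % 3)

/-- The `n`-antiprism, on vertices `u i = (0, i)` and `w i = (1, i)` for `i : ZMod n`,
with edges `u i — u (i+1)`, `w i — w (i+1)`, `u i — w i` and `u (i+1) — w i`. -/
def Antiprism (n : ℕ) : SimpleGraph (Fin 2 × ZMod n) :=
  SimpleGraph.fromRel (fun p q =>
    (p.1 = q.1 ∧ q.2 = p.2 + 1) ∨
    (p.1 = 0 ∧ q.1 = 1 ∧ (q.2 = p.2 ∨ p.2 = q.2 + 1)))

/-- The graph `G₇` on vertices `x = 0`, `y = 1`, `a = 2`, `b = 3`, `c = 4`, `d = 5`,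
`e = 6`, with the 13 edges `xa, xd, xy, yb, ye, ab, ac, ad, bc, be, cd, ce, de`. -/
def G7 : SimpleGraph (Fin 7) :=
  SimpleGraph.fromEdgeSet
    {s((0 : Fin 7), 2), s((0 : Fin 7), 5), s((0 : Fin 7), 1),
     s((1 : Fin 7), 3), s((1 : Fin 7), 6),
     s((2 : Fin 7), 3), s((2 : Fin 7), 4), s((2 : Fin 7), 5),
     s((3 : Fin 7), 4), s((3 : Fin 7), 6),
     s((4 : Fin 7), 5), s((4 : Fin 7), 6), s((5 : Fin 7), 6)}


/-!
Translation by `v` is an automorphism of the octahedron, so we may take `v = 0`. Cutting an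
Eulerian circuit at the partial sums of `L` gives an `L`-path-chain as soon as every piece is a
path. In the circuit `0 1 2 4 3 5 0 2 3 1 5 4 0` the only window of at most four edges that is
not a path is `3 5 0 2 3`, starting at position 4; in `0 1 2 3 5 0 2 4 3 1 5 4 0` the only ones
are `2 3 5 0 2` and `4 3 1 5 4`, starting at positions 2 and 7. A piece of `L` of length 4 at
position 4 overlaps both of the latter, so one of the two circuits always works.
-/

theorem List.mem_take_drop_iff {α : Type*} {l : List α} {s t : ℕ} {a : α} :
    a ∈ (l.drop s).take t ↔ ∃ n, s ≤ n ∧ n < s + t ∧ l[n]? = some a := by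
  rw [List.mem_iff_getElem?]
  constructor
  · rintro ⟨n, hn⟩
    rw [List.getElem?_take] at hn
    split_ifs at hn with h
    · exact ⟨s + n, by omega, by omega, by rwa [List.getElem?_drop] at hn⟩
  · rintro ⟨n, hsn, hnt, hn⟩
    refine ⟨n - s, ?_⟩
    rw [List.getElem?_take, if_pos (by omega), List.getElem?_drop, Nat.add_sub_cancel' hsn, hn]

section PartialSum

variable {k : ℕ} (ℓ : Fin k → ℕ)

/-- `ℓ` is padded with zeros beyond `k`, so this is `ℓ 0 + ⋯ + ℓ (n - 1)` for every `n`. -/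
def partialSum (n : ℕ) : ℕ :=
  ∑ j ∈ Finset.range n, if h : j < k then ℓ ⟨j, h⟩ else 0

@[simp]
theorem partialSum_zero : partialSum ℓ 0 = 0 := rfl

theorem partialSum_succ (i : Fin k) : partialSum ℓ (i + 1) = partialSum ℓ i + ℓ i := by
  rw [partialSum, partialSum, Finset.sum_range_succ, dif_pos i.isLt]

theorem partialSum_mono : Monotone (partialSum ℓ) := fun _ _ h =>
  Finset.sum_le_sum_of_subset (Finset.range_subset_range.2 h)

theorem partialSum_self : partialSum ℓ k = ∑ i, ℓ i := by
  rw [partialSum, ← Fin.sum_univ_eq_sum_range]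
  exact Finset.sum_congr rfl fun i _ => dif_pos i.isLt

theorem partialSum_add_le (i : Fin k) : partialSum ℓ i + ℓ i ≤ ∑ j, ℓ j := by
  rw [← partialSum_succ, ← partialSum_self]
  exact partialSum_mono ℓ i.isLt

theorem partialSum_add_le_or {i j : Fin k} (hij : i ≠ j) :
    partialSum ℓ i + ℓ i ≤ partialSum ℓ j ∨ partialSum ℓ j + ℓ j ≤ partialSum ℓ i := by
  rw [← partialSum_succ, ← partialSum_succ]
  rcases lt_or_gt_of_ne hij with h | h
  · exact Or.inl (partialSum_mono ℓ h)
  · exact Or.inr (partialSum_mono ℓ h)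

theorem exists_partialSum_le_lt {n : ℕ} (hn : n < ∑ i, ℓ i) :
    ∃ i : Fin k, partialSum ℓ i ≤ n ∧ n < partialSum ℓ i + ℓ i := by
  suffices ∀ m ≤ k, n < partialSum ℓ m → ∃ i : Fin k, partialSum ℓ i ≤ n ∧ n < partialSum ℓ i + ℓ i
    from this k le_rfl (by rwa [partialSum_self])
  intro m
  induction m with
  | zero => simp
  | succ m ih =>
    intro hm hn
    by_cases h : n < partialSum ℓ m
    · exact ih (by omega) h
    · exact ⟨⟨m, hm⟩, not_lt.1 h, by rwa [← partialSum_succ]⟩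

end PartialSum

theorem isEulerianTrail_of_forall_adj_iff {G : SimpleGraph V} {u w : V} {W : G.Walk u w}
    (hnodup : W.edges.Nodup) (hcover : ∀ a b, G.Adj a b ↔ s(a, b) ∈ W.edges) :
    IsEulerianTrail W :=
  ⟨(Walk.isTrail_def W).2 hnodup, fun e => e.ind hcover⟩

theorem IsEulerianTrail.pathChain {G : SimpleGraph V} {u w : V} {W : G.Walk u w}
    (hW : IsEulerianTrail W) {k : ℕ} {ℓ : Fin k → ℕ} (hsum : ∑ i, ℓ i = W.length)
    (hpath : ∀ i : Fin k, ((W.drop (partialSum ℓ i)).take (ℓ i)).IsPath) :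
    PathChain G u w ℓ := by
  have hfit (i : Fin k) : partialSum ℓ i + ℓ i ≤ W.length := hsum ▸ partialSum_add_le ℓ i
  have hedges (i : Fin k) (e : Sym2 V) :
      e ∈ ((W.drop (partialSum ℓ i)).take (ℓ i)).edges ↔
        ∃ n, partialSum ℓ i ≤ n ∧ n < partialSum ℓ i + ℓ i ∧ W.edges[n]? = some e := by
    rw [Walk.edges_take, Walk.edges_drop, List.mem_take_drop_iff]
  refine ⟨fun i => W.getVert (partialSum ℓ i),
    fun i => ((W.drop (partialSum ℓ i)).take (ℓ i)).copy rfl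
      (by rw [Walk.drop_getVert, ← partialSum_succ]; rfl), ?_, ?_, ?_, ?_, ?_, ?_⟩
  · simp
  · simp [partialSum_self, hsum]
  · intro i
    rw [Walk.isPath_copy]
    exact hpath i
  · intro i
    have := hfit i
    rw [Walk.length_copy, Walk.take_length, Walk.drop_length]
    omega
  · intro i j hij e hi hj
    rw [Walk.edges_copy, hedges] at hi hj
    obtain ⟨n, hin, hni, hn⟩ := hi
    obtain ⟨m, hjm, hmj, hm⟩ := hj
    have hnm : n ≠ m := by rcases partialSum_add_le_or ℓ hij with h | h <;> omega
    have hlen := (List.getElem?_eq_some_iff.1 hn).1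
    have hlen' := (List.getElem?_eq_some_iff.1 hm).1
    have hnodup := List.nodup_iff_getElem?_ne_getElem?.1 hW.1.edges_nodup
    rcases lt_or_gt_of_ne hnm with h | h
    · exact hnodup n m h hlen' (hn.trans hm.symm)
    · exact hnodup m n h hlen (hm.trans hn.symm)
  · intro e he
    obtain ⟨n, hn⟩ := List.mem_iff_getElem?.1 ((hW.2 e).1 he)
    have hn' : n < ∑ i, ℓ i := hsum ▸ W.length_edges ▸ (List.getElem?_eq_some_iff.1 hn).1
    obtain ⟨i, hi⟩ := exists_partialSum_le_lt ℓ hn'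
    exact ⟨i, by rw [Walk.edges_copy, hedges]; exact ⟨n, hi.1, hi.2, hn⟩⟩

theorem PathChain.map {V' : Type*} {G : SimpleGraph V} {G' : SimpleGraph V'} (f : G ≃g G')
    {u w : V} {k : ℕ} {ℓ : Fin k → ℕ} (h : PathChain G u w ℓ) :
    PathChain G' (f u) (f w) ℓ := by
  obtain ⟨v, P, hu, hw, hpath, hlen, hdisj, hcover⟩ := h
  refine ⟨f ∘ v, fun i => (P i).map f.toHom, by simp [hu], by simp [hw],
    fun i => (hpath i).map f.injective, fun i => by simp [hlen], ?_, ?_⟩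
  · intro i j hij e hi hj
    rw [Walk.edges_map, List.mem_map] at hi hj
    obtain ⟨a, ha, rfl⟩ := hi
    obtain ⟨b, hb, hab⟩ := hj
    exact hdisj i j hij a ha (Sym2.map.injective f.injective hab ▸ hb)
  · intro e he
    obtain ⟨i, hi⟩ := hcover (e.map f.symm) (f.symm.map_mem_edgeSet_iff.2 he)
    refine ⟨i, Walk.edges_map _ _ ▸ List.mem_map.2 ⟨_, hi, ?_⟩⟩
    simp [Sym2.map_map]

theorem isPath_drop_take_iff {G : SimpleGraph V} {u w : V} {W : G.Walk u w}
    {s t : ℕ} (hs : s ≤ W.length) :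
    ((W.drop s).take t).IsPath ↔ ((W.support.drop s).take (t + 1)).Nodup := by
  rw [Walk.isPath_def, Walk.support_take, Walk.drop_support_eq_support_drop_min,
    min_eq_left hs]

instance : DecidableRel Octahedron.Adj := fun a b =>
  decidable_of_iff _ (fromRel_adj (fun i j : Fin 6 => (i : ℕ) % 3 ≠ (j : ℕ) % 3) a b).symm

/-- Translation in `Fin 6` preserves differences of residues mod 3, since `3 ∣ 6`. -/
theorem octahedron_adj_add_right : ∀ v a b : Fin 6,
    Octahedron.Adj (a + v) (b + v) ↔ Octahedron.Adj a b := by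
  decide

def octahedronAddRight (v : Fin 6) : Octahedron ≃g Octahedron where
  toEquiv := Equiv.addRight v
  map_rel_iff' := octahedron_adj_add_right v _ _

@[simp]
theorem octahedronAddRight_apply (v a : Fin 6) : octahedronAddRight v a = a + v := rfl

def octahedronCircuitA : Octahedron.Walk 0 0 :=
  Walk.ofSupport [0, 1, 2, 4, 3, 5, 0, 2, 3, 1, 5, 4, 0] (List.cons_ne_nil _ _) (by decide)

def octahedronCircuitB : Octahedron.Walk 0 0 :=
  Walk.ofSupport [0, 1, 2, 3, 5, 0, 2, 4, 3, 1, 5, 4, 0] (List.cons_ne_nil _ _) (by decide)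

theorem isEulerianTrail_octahedronCircuitA : IsEulerianTrail octahedronCircuitA :=
  isEulerianTrail_of_forall_adj_iff (by decide) (by decide)

theorem isEulerianTrail_octahedronCircuitB : IsEulerianTrail octahedronCircuitB :=
  isEulerianTrail_of_forall_adj_iff (by decide) (by decide)

theorem octahedronCircuitA_isPath_drop_take {s t : ℕ} (hst : s + t ≤ 12) (ht : t ≤ 4)
    (h₄ : ¬(s = 4 ∧ t = 4)) : ((octahedronCircuitA.drop s).take t).IsPath := by
  have hwindows : ∀ s : Fin 13, ∀ t : Fin 5, s.val + t.val ≤ 12 → ¬(s.val = 4 ∧ t.val = 4) →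
      ((octahedronCircuitA.support.drop s).take (t + 1)).Nodup := by
    decide
  rw [isPath_drop_take_iff (by change s ≤ 12; omega)]
  exact hwindows ⟨s, by omega⟩ ⟨t, by omega⟩ hst h₄

theorem octahedronCircuitB_isPath_drop_take {s t : ℕ} (hst : s + t ≤ 12) (ht : t ≤ 4)
    (h₂ : ¬(s = 2 ∧ t = 4)) (h₇ : ¬(s = 7 ∧ t = 4)) :
    ((octahedronCircuitB.drop s).take t).IsPath := by
  have hwindows : ∀ s : Fin 13, ∀ t : Fin 5, s.val + t.val ≤ 12 → ¬(s.val = 2 ∧ t.val = 4) →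
      ¬(s.val = 7 ∧ t.val = 4) → ((octahedronCircuitB.support.drop s).take (t + 1)).Nodup := by
    decide
  rw [isPath_drop_take_iff (by change s ≤ 12; omega)]
  exact hwindows ⟨s, by omega⟩ ⟨t, by omega⟩ hst h₂ h₇

/-- for every vertex `v` of the octahedron and every sequence
`L = (ℓ₁, …, ℓ_k)` with each `ℓᵢ ∈ {1, 2, 3, 4}` and `ℓ₁ + ⋯ + ℓ_k = 12`, the
octahedron has a `P_{(L,v)}`-decomposition, i.e. an `L`-path-chain from `v` to `v`. -/
theorem octahedron_pathChain (v : Fin 6) (k : ℕ) (ℓ : Fin k → ℕ)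
    (hbound : ∀ i, 1 ≤ ℓ i ∧ ℓ i ≤ 4) (hsum : ∑ i, ℓ i = 12) :
    PathChain Octahedron v v ℓ := by
  suffices h : PathChain Octahedron 0 0 ℓ by simpa using h.map (octahedronAddRight v)
  have hfit (i : Fin k) : partialSum ℓ i + ℓ i ≤ 12 := hsum ▸ partialSum_add_le ℓ i
  by_cases hmid : ∃ i : Fin k, partialSum ℓ i = 4 ∧ ℓ i = 4
  · obtain ⟨i, hi, hℓi⟩ := hmid
    have hfar (j : Fin k) (hj : ℓ j = 4) : partialSum ℓ j ≠ 2 ∧ partialSum ℓ j ≠ 7 := by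
      rcases eq_or_ne j i with rfl | hji
      · omega
      · have := partialSum_add_le_or ℓ hji
        omega
    exact isEulerianTrail_octahedronCircuitB.pathChain hsum fun j =>
      octahedronCircuitB_isPath_drop_take (hfit j) (hbound j).2
        (fun h => (hfar j h.2).1 h.1) (fun h => (hfar j h.2).2 h.1)
  · exact isEulerianTrail_octahedronCircuitA.pathChain hsum fun j =>
      octahedronCircuitA_isPath_drop_take (hfit j) (hbound j).2 fun h => hmid ⟨j, h⟩

end Quartic
end

section
/- The graph G_7 admits a 4-locally self-avoiding Eulerian trail from x to y. -/
open SimpleGraph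

namespace Quartic

variable {V : Type*}

theorem isEulerianTrail_iff_isEulerian [DecidableEq V] {G : SimpleGraph V} {u v : V}
    (W : G.Walk u v) :
    IsEulerianTrail W ↔ W.IsEulerian := by
  rw [Walk.isEulerian_iff, IsEulerianTrail]
  exact and_congr_right fun _ =>
    forall_congr' fun _ => ⟨Iff.mp, fun h => ⟨h, fun he => W.edges_subset_edgeSet he⟩⟩

theorem trailLSA4_of_getElem?_ne {G : SimpleGraph V} {u v : V} (W : G.Walk u v)
    (h : ∀ i < W.support.length, ∀ t < 5, 0 < t → W.support[i]? ≠ W.support[i + t]?) :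
    TrailLSA4 W := by
  rintro ⟨i, t, ht, ht4, hlen, heq, -⟩
  exact h i (by omega) t (by omega) ht heq

/-- The trail `x a b e c d x y b c a d e y` in the vertex names of the paper. -/
def g7Trail : G7.Walk 0 1 :=
  .cons (by simp [G7] : G7.Adj 0 2) <| .cons (by simp [G7] : G7.Adj 2 3) <|
  .cons (by simp [G7] : G7.Adj 3 6) <| .cons (by simp [G7] : G7.Adj 6 4) <|
  .cons (by simp [G7] : G7.Adj 4 5) <| .cons (by simp [G7] : G7.Adj 5 0) <|
  .cons (by simp [G7] : G7.Adj 0 1) <| .cons (by simp [G7] : G7.Adj 1 3) <|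
  .cons (by simp [G7] : G7.Adj 3 4) <| .cons (by simp [G7] : G7.Adj 4 2) <|
  .cons (by simp [G7] : G7.Adj 2 5) <| .cons (by simp [G7] : G7.Adj 5 6) <|
  .cons (by simp [G7] : G7.Adj 6 1) .nil

theorem g7Trail_isTrail : g7Trail.IsTrail := by
  rw [Walk.isTrail_def]
  decide

theorem g7Trail_isEulerian : g7Trail.IsEulerian := by
  refine g7Trail_isTrail.isEulerian_of_forall_mem fun e he => ?_
  simp only [G7, edgeSet_fromEdgeSet, Set.mem_sdiff, Set.mem_insert_iff,
    Set.mem_singleton_iff] at he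
  obtain ⟨rfl | rfl | rfl | rfl | rfl | rfl | rfl | rfl | rfl | rfl | rfl | rfl | rfl, -⟩ := he
    <;> decide

theorem g7Trail_trailLSA4 : TrailLSA4 g7Trail :=
  trailLSA4_of_getElem?_ne _ (by decide)

/-- the graph `G₇` admits a 4-locally self-avoiding Eulerian trail from
`x` (= vertex 0) to `y` (= vertex 1). -/
theorem G7_has_LSA4_eulerian_trail :
    ∃ W : G7.Walk (0 : Fin 7) (1 : Fin 7), IsEulerianTrail W ∧ TrailLSA4 W :=
  ⟨g7Trail, (isEulerianTrail_iff_isEulerian _).mpr g7Trail_isEulerian, g7Trail_trailLSA4⟩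

end Quartic
end
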